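/- (Wedin sin-θ bound, correctly specified rank) Let A be a rank-r matrix, E a perturbation, and let Ã = Ũ Σ̃ Ṽ^T be the rank-r truncated SVD of X = A + E. Then the sine of the largest principal angle between row(A) and row(Ã) satisfies sin θ_r ≤ min( max(‖E Ṽ‖, ‖E^T Ũ‖) / σ_min(Ã), 1 ), where σ_min(Ã) is the r-th (smallest nonzero) singular value of Ã. -/

import Mathlib

/-
Both row spaces have dimension `r`: `row A` because `rank A = r`, and `row Ã = range (Ṽ Σ̃)`
because `Ũ` has orthonormal columns and `Σ̃` is invertible. Since `Xᵀ Ũ = Ṽ Σ̃`, a vector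
`y = Ṽ Σ̃ v` of `row Ã` splits as `Aᵀ Ũ v + Eᵀ Ũ v` with first summand in `row A`, so its
distance to `row A` is at most `‖Eᵀ Ũ‖ ‖v‖ ≤ (‖Eᵀ Ũ‖ / σ_min) ‖y‖`. Between subspaces `V`, `W`
of equal dimension such a bound `R < 1` transfers from `V` to `W`: projecting onto `W` is then
a bijection `V → W`, and for `x = P_W y` one has `‖x‖² = ⟪P_V x, y⟫`, which carries the cosine
bound `(1 - R²) ‖y‖² ≤ ‖P_W y‖²` from `V` over to `W`. For `R ≥ 1` the trivial bound `1` holds.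
-/

open Matrix

/-- View a plain vector as an element of Euclidean space. -/
noncomputable def toEuc {n : ℕ} (v : Fin n → ℝ) : EuclideanSpace ℝ (Fin n) := WithLp.toLp 2 v

/-- The row space of a matrix, as a subspace of Euclidean space `ℝ^n`. -/
noncomputable def rowSpace {m : Type*} {n : ℕ} (A : Matrix m (Fin n) ℝ) :
    Submodule ℝ (EuclideanSpace ℝ (Fin n)) :=
  Submodule.span ℝ (Set.range fun i => toEuc (A i))

/-- The orthogonal projection matrix onto a subspace of `ℝ^n`. -/
noncomputable def projMat {n : ℕ} (U : Submodule ℝ (EuclideanSpace ℝ (Fin n))) :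
    Matrix (Fin n) (Fin n) ℝ :=
  Matrix.toEuclideanLin.symm (U.subtype ∘ₗ (U.orthogonalProjectionOnto).toLinearMap)

/-- The operator (spectral) norm of a matrix. -/
noncomputable def opNorm {m : Type*} [Fintype m] {n : ℕ} (A : Matrix m (Fin n) ℝ) : ℝ :=
  ‖(Matrix.toEuclideanLin A).toContinuousLinearMap‖

theorem Matrix.isHermitian_transpose_mul_self {m : Type*} [Fintype m] {n : ℕ}
    (A : Matrix m (Fin n) ℝ) : (Aᵀ * A).IsHermitian := by
  simpa [Matrix.conjTranspose_eq_transpose_of_trivial] using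
    Matrix.isHermitian_conjTranspose_mul_self A

/-- Singular values of a matrix, in ascending order. -/
noncomputable def svalAsc {m : Type*} [Fintype m] {n : ℕ} (A : Matrix m (Fin n) ℝ) :
    Fin n → ℝ := fun i =>
  Real.sqrt ((Matrix.isHermitian_transpose_mul_self A).eigenvalues
    (Tuple.sort (Matrix.isHermitian_transpose_mul_self A).eigenvalues i))

/-- Singular values of a matrix, in descending order (`svalDesc A 0` is the largest). -/
noncomputable def svalDesc {m : Type*} [Fintype m] {n : ℕ} (A : Matrix m (Fin n) ℝ)
    (i : Fin n) : ℝ :=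
  svalAsc A i.rev

namespace Submodule

variable {F : Type*} [NormedAddCommGroup F] [InnerProductSpace ℝ F]

theorem norm_sub_starProjection_le_norm_sub (K : Submodule ℝ F) [K.HasOrthogonalProjection]
    (x : F) {w : F} (hw : w ∈ K) : ‖x - K.starProjection x‖ ≤ ‖x - w‖ := by
  rw [starProjection_minimal]
  exact ciInf_le ⟨0, Set.forall_mem_range.2 fun _ => norm_nonneg _⟩ (⟨w, hw⟩ : K)

theorem norm_sq_eq_norm_starProjection_sq_add (K : Submodule ℝ F) [K.HasOrthogonalProjection]
    (x : F) : ‖x‖ ^ 2 = ‖K.starProjection x‖ ^ 2 + ‖x - K.starProjection x‖ ^ 2 := by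
  simpa [starProjection_orthogonal'] using norm_sq_eq_add_norm_sq_starProjection x K

theorem norm_sub_starProjection_le_iff (K : Submodule ℝ F) [K.HasOrthogonalProjection]
    (x : F) {R : ℝ} (hR : 0 ≤ R) :
    ‖x - K.starProjection x‖ ≤ R * ‖x‖ ↔ (1 - R ^ 2) * ‖x‖ ^ 2 ≤ ‖K.starProjection x‖ ^ 2 := by
  rw [← sq_le_sq₀ (norm_nonneg _) (by positivity), mul_pow,
    norm_sq_eq_norm_starProjection_sq_add K x]
  constructor <;> intro h <;> linarith

variable [FiniteDimensional ℝ F]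

theorem mul_norm_sq_le_norm_starProjection_sq_symm {V W : Submodule ℝ F}
    (hdim : Module.finrank ℝ V = Module.finrank ℝ W) {κ : ℝ} (hκ : 0 < κ)
    (h : ∀ y ∈ V, κ * ‖y‖ ^ 2 ≤ ‖W.starProjection y‖ ^ 2) {x : F} (hx : x ∈ W) :
    κ * ‖x‖ ^ 2 ≤ ‖V.starProjection x‖ ^ 2 := by
  let f : V →ₗ[ℝ] W := W.orthogonalProjectionOnto.toLinearMap ∘ₗ V.subtype
  have hf_inj : Function.Injective f := by
    refine (injective_iff_map_eq_zero f).2 fun y hy => ?_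
    have hy' : W.starProjection y = 0 := congrArg Subtype.val hy
    have hκy : κ * ‖(y : F)‖ ^ 2 ≤ κ * 0 := by simpa [hy'] using h y y.2
    have hy0 : ‖(y : F)‖ ^ 2 = 0 := le_antisymm (le_of_mul_le_mul_left hκy hκ) (sq_nonneg _)
    exact Subtype.ext (norm_eq_zero.1 ((pow_eq_zero_iff two_ne_zero).1 hy0))
  obtain ⟨y, hy⟩ :=
    (LinearMap.injective_iff_surjective_of_finrank_eq_finrank hdim).1 hf_inj ⟨x, hx⟩
  have hPy : W.starProjection y = x := congrArg Subtype.val hy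
  have hxy : inner ℝ x (y : F) = ‖x‖ ^ 2 := by
    have := starProjection_inner_eq_zero (K := W) (y : F) x hx
    rw [hPy, inner_sub_left, real_inner_comm, real_inner_self_eq_norm_sq] at this
    linarith
  have hxy' : inner ℝ x (y : F) = inner ℝ (V.starProjection x) (y : F) := by
    have := starProjection_inner_eq_zero (K := V) x (y : F) y.2
    rw [inner_sub_left] at this
    linarith
  have hCS : ‖x‖ ^ 2 ≤ ‖V.starProjection x‖ * ‖(y : F)‖ := hxy ▸ hxy' ▸ real_inner_le_norm _ _
  have hy_le : κ * ‖(y : F)‖ ^ 2 ≤ ‖x‖ ^ 2 := hPy ▸ h y y.2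
  have key : ‖x‖ ^ 2 * (κ * ‖x‖ ^ 2) ≤ ‖x‖ ^ 2 * ‖V.starProjection x‖ ^ 2 :=
    calc ‖x‖ ^ 2 * (κ * ‖x‖ ^ 2) ≤ κ * (‖V.starProjection x‖ * ‖(y : F)‖) ^ 2 := by
          nlinarith [pow_le_pow_left₀ (sq_nonneg ‖x‖) hCS 2]
      _ = ‖V.starProjection x‖ ^ 2 * (κ * ‖(y : F)‖ ^ 2) := by ring
      _ ≤ ‖V.starProjection x‖ ^ 2 * ‖x‖ ^ 2 := by gcongr
      _ = ‖x‖ ^ 2 * ‖V.starProjection x‖ ^ 2 := mul_comm _ _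
  rcases (sq_nonneg ‖x‖).eq_or_lt with hx0 | hx0
  · rw [← hx0, mul_zero]; positivity
  · exact le_of_mul_le_mul_left key hx0

theorem norm_sub_starProjection_le_symm {V W : Submodule ℝ F}
    (hdim : Module.finrank ℝ V = Module.finrank ℝ W) {R : ℝ} (hR0 : 0 ≤ R) (hR1 : R < 1)
    (h : ∀ y ∈ V, ‖y - W.starProjection y‖ ≤ R * ‖y‖) {x : F} (hx : x ∈ W) :
    ‖x - V.starProjection x‖ ≤ R * ‖x‖ :=
  (V.norm_sub_starProjection_le_iff x hR0).2 <|
    mul_norm_sq_le_norm_starProjection_sq_symm hdim (by nlinarith)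
      (fun y hy => (W.norm_sub_starProjection_le_iff y hR0).1 (h y hy)) hx

theorem norm_starProjection_orthogonal_comp_starProjection_le {V W : Submodule ℝ F}
    (hdim : Module.finrank ℝ V = Module.finrank ℝ W) {R : ℝ} (hR0 : 0 ≤ R)
    (h : ∀ y ∈ V, ‖y - W.starProjection y‖ ≤ R * ‖y‖) :
    ‖Vᗮ.starProjection ∘L W.starProjection‖ ≤ min R 1 := by
  refine ContinuousLinearMap.opNorm_le_bound _ (le_min hR0 zero_le_one) fun z => ?_
  set x := W.starProjection z
  have hxz : ‖x‖ ≤ ‖z‖ := W.norm_starProjection_apply_le z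
  rw [ContinuousLinearMap.comp_apply, starProjection_orthogonal', _root_.sub_apply,
    one_apply_eq_self]
  rcases lt_or_ge R 1 with hR1 | hR1
  · calc ‖x - V.starProjection x‖ ≤ R * ‖x‖ :=
          norm_sub_starProjection_le_symm hdim hR0 hR1 h (W.starProjection_apply_mem z)
      _ ≤ min R 1 * ‖z‖ := by rw [min_eq_left hR1.le]; gcongr
  · calc ‖x - V.starProjection x‖ ≤ ‖x - 0‖ :=
          V.norm_sub_starProjection_le_norm_sub x V.zero_mem
      _ ≤ min R 1 * ‖z‖ := by rwa [min_eq_right hR1, one_mul, sub_zero]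

end Submodule

namespace Matrix

variable {l m n : Type*} [Fintype m] [Fintype n] [DecidableEq m] [DecidableEq n]

theorem toEuclideanLin_mul (M : Matrix l m ℝ) (N : Matrix m n ℝ) :
    toEuclideanLin (M * N) = toEuclideanLin M ∘ₗ toEuclideanLin N :=
  toLpLin_mul_same _ _ _

theorem norm_toEuclideanLin_apply_of_transpose_mul_self_eq_one {V : Matrix m n ℝ}
    (hV : Vᵀ * V = 1) (u : EuclideanSpace ℝ n) : ‖toEuclideanLin V u‖ = ‖u‖ := by
  have hadj : (toEuclideanLin V).adjoint ∘ₗ toEuclideanLin V = LinearMap.id := by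
    rw [← toEuclideanLin_conjTranspose_eq_adjoint, ← toEuclideanLin_mul,
      conjTranspose_eq_transpose_of_trivial, hV]
    exact toLpLin_one _
  rw [norm_eq_sqrt_real_inner, norm_eq_sqrt_real_inner, ← LinearMap.adjoint_inner_right,
    ← LinearMap.comp_apply, hadj, LinearMap.id_apply]

theorem mul_norm_le_norm_toEuclideanLin_diagonal {σ : n → ℝ} {s : ℝ} (hs : 0 ≤ s)
    (hσ : ∀ i, s ≤ σ i) (u : EuclideanSpace ℝ n) :
    s * ‖u‖ ≤ ‖toEuclideanLin (diagonal σ) u‖ := by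
  rw [← sq_le_sq₀ (by positivity) (norm_nonneg _), mul_pow, EuclideanSpace.norm_sq_eq,
    EuclideanSpace.norm_sq_eq, Finset.mul_sum]
  refine Finset.sum_le_sum fun i _ => ?_
  simp only [toLpLin_apply, PiLp.toLp_apply, mulVec_diagonal, Real.norm_eq_abs, sq_abs,
    mul_pow]
  gcongr
  exact hσ i

theorem range_toEuclideanLin_mul_of_mul_eq_one [Fintype l] [DecidableEq l] (M : Matrix l m ℝ)
    {B : Matrix m n ℝ} {C : Matrix n m ℝ} (h : B * C = 1) :
    LinearMap.range (toEuclideanLin (M * B)) = LinearMap.range (toEuclideanLin M) := by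
  have hB : Function.Surjective (toEuclideanLin B) := fun u =>
    ⟨toEuclideanLin C u, by rw [← LinearMap.comp_apply, ← toEuclideanLin_mul, h]; simp⟩
  rw [toEuclideanLin_mul, LinearMap.range_comp_of_range_eq_top _ (LinearMap.range_eq_top.2 hB)]

end Matrix

theorem toEuclideanLin_projMat {n : ℕ} (U : Submodule ℝ (EuclideanSpace ℝ (Fin n))) :
    toEuclideanLin (projMat U) = U.starProjection.toLinearMap := by
  rw [projMat, LinearEquiv.apply_symm_apply]
  rfl

theorem opNorm_one_sub_projMat_mul_projMat {n : ℕ}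
    (V W : Submodule ℝ (EuclideanSpace ℝ (Fin n))) :
    opNorm ((1 - projMat V) * projMat W) = ‖Vᗮ.starProjection ∘L W.starProjection‖ := by
  rw [opNorm, Submodule.starProjection_orthogonal']
  congr 1
  ext z : 1
  simp [toEuclideanLin_projMat]

theorem rowSpace_eq_range {m : Type*} [Fintype m] [DecidableEq m] {n : ℕ}
    (M : Matrix m (Fin n) ℝ) : rowSpace M = LinearMap.range (toEuclideanLin Mᵀ) := by
  have h : toEuclideanLin Mᵀ = ((WithLp.linearEquiv 2 ℝ (Fin n → ℝ)).symm.toLinearMap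
      ∘ₗ Mᵀ.mulVecLin) ∘ₗ (WithLp.linearEquiv 2 ℝ (m → ℝ)).toLinearMap := rfl
  rw [rowSpace, h, LinearMap.range_comp_of_range_eq_top _ (LinearEquiv.range _),
    LinearMap.range_comp, range_mulVecLin, Submodule.map_span, ← Set.range_comp]
  rfl

theorem finrank_rowSpace {m : Type*} [Finite m] {n : ℕ} (M : Matrix m (Fin n) ℝ) :
    Module.finrank ℝ (rowSpace M) = M.rank := by
  have h : rowSpace M = (Submodule.span ℝ (Set.range M.row)).map
      (WithLp.linearEquiv 2 ℝ (Fin n → ℝ)).symm.toLinearMap := by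
    rw [rowSpace, Submodule.map_span, ← Set.range_comp]
    rfl
  rw [h, LinearEquiv.finrank_map_eq, rank_eq_finrank_span_row]

theorem opNorm_nonneg {m : Type*} [Fintype m] {n : ℕ} (M : Matrix m (Fin n) ℝ) : 0 ≤ opNorm M :=
  norm_nonneg _

theorem norm_toEuclideanLin_apply_le {m : Type*} [Fintype m] {n : ℕ} (M : Matrix m (Fin n) ℝ)
    (v : EuclideanSpace ℝ (Fin n)) : ‖toEuclideanLin M v‖ ≤ opNorm M * ‖v‖ :=
  (toEuclideanLin M).toContinuousLinearMap.le_opNorm v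

section SingularVectors

variable {d n r : ℕ} {Ut : Matrix (Fin d) (Fin r) ℝ} {Vt : Matrix (Fin n) (Fin r) ℝ}
  {σ : Fin r → ℝ}

theorem rowSpace_mul_diagonal_mul_transpose (hUt : Utᵀ * Ut = 1) :
    rowSpace (Ut * diagonal σ * Vtᵀ) = LinearMap.range (toEuclideanLin (Vt * diagonal σ)) := by
  rw [rowSpace_eq_range, transpose_mul, transpose_mul, transpose_transpose, diagonal_transpose,
    ← Matrix.mul_assoc, range_toEuclideanLin_mul_of_mul_eq_one _ hUt]

theorem mul_norm_le_norm_toEuclideanLin_mul_diagonal (hVt : Vtᵀ * Vt = 1) {s : ℝ} (hs : 0 ≤ s)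
    (hσ : ∀ i, s ≤ σ i) (v : EuclideanSpace ℝ (Fin r)) :
    s * ‖v‖ ≤ ‖toEuclideanLin (Vt * diagonal σ) v‖ := by
  rw [toEuclideanLin_mul, LinearMap.comp_apply,
    norm_toEuclideanLin_apply_of_transpose_mul_self_eq_one hVt]
  exact mul_norm_le_norm_toEuclideanLin_diagonal hs hσ v

theorem finrank_range_toEuclideanLin_mul_diagonal (hVt : Vtᵀ * Vt = 1) {s : ℝ} (hs : 0 < s)
    (hσ : ∀ i, s ≤ σ i) :
    Module.finrank ℝ (LinearMap.range (toEuclideanLin (Vt * diagonal σ))) = r := by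
  rw [LinearMap.finrank_range_of_inj, finrank_euclideanSpace_fin]
  refine (injective_iff_map_eq_zero _).2 fun v hv => ?_
  have hv0 : s * ‖v‖ ≤ s * 0 := by
    rw [mul_zero, ← norm_zero (E := EuclideanSpace ℝ (Fin n)), ← hv]
    exact mul_norm_le_norm_toEuclideanLin_mul_diagonal hVt hs.le hσ v
  exact norm_eq_zero.1 (le_antisymm (le_of_mul_le_mul_left hv0 hs) (norm_nonneg v))

theorem norm_sub_starProjection_rowSpace_le {A E : Matrix (Fin d) (Fin n) ℝ}
    (hVt : Vtᵀ * Vt = 1) {s : ℝ} (hs : 0 < s) (hσ : ∀ i, s ≤ σ i)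
    (hsv : (A + E)ᵀ * Ut = Vt * diagonal σ) {y : EuclideanSpace ℝ (Fin n)}
    (hy : y ∈ LinearMap.range (toEuclideanLin (Vt * diagonal σ))) :
    ‖y - (rowSpace A).starProjection y‖ ≤ opNorm (Eᵀ * Ut) / s * ‖y‖ := by
  obtain ⟨v, rfl⟩ := hy
  set w := toEuclideanLin Aᵀ (toEuclideanLin Ut v)
  have hw : w ∈ rowSpace A := rowSpace_eq_range A ▸ LinearMap.mem_range_self _ _
  have hsplit : toEuclideanLin (Vt * diagonal σ) v = w + toEuclideanLin (Eᵀ * Ut) v := by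
    rw [← hsv, transpose_add, Matrix.add_mul, map_add, LinearMap.add_apply, toEuclideanLin_mul,
      LinearMap.comp_apply]
  calc _ ≤ ‖toEuclideanLin (Vt * diagonal σ) v - w‖ :=
        (rowSpace A).norm_sub_starProjection_le_norm_sub _ hw
    _ = ‖toEuclideanLin (Eᵀ * Ut) v‖ := by rw [hsplit, add_sub_cancel_left]
    _ ≤ opNorm (Eᵀ * Ut) * ‖v‖ := norm_toEuclideanLin_apply_le _ v
    _ ≤ opNorm (Eᵀ * Ut) / s * ‖toEuclideanLin (Vt * diagonal σ) v‖ := by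
        rw [div_mul_eq_mul_div, le_div_iff₀ hs, mul_assoc]
        gcongr
        · exact opNorm_nonneg _
        · rw [mul_comm]
          exact mul_norm_le_norm_toEuclideanLin_mul_diagonal hVt hs.le hσ v

end SingularVectors

/-- Wedin sin-θ bound, correctly specified rank.
`A` has rank `r`, `X = A + E`, and `Ã = Ũ Σ̃ Ṽᵀ` is the rank-`r` truncated SVD of `X`
(`Ũ`, `Ṽ` have `r` orthonormal columns, `Σ̃ = diagonal σd` with positive decreasing
entries which are the top `r` singular values of `X`).  Then the sine of the largest
principal angle between `row A` and `row Ã` is at most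
`min (max ‖E Ṽ‖ ‖Eᵀ Ũ‖ / σ_min(Ã)) 1`. -/
theorem wedin_bound_correct_rank (d n r : ℕ) (hr : 0 < r)
    (A E X : Matrix (Fin d) (Fin n) ℝ) (hA : A.rank = r) (hX : X = A + E)
    (Ut : Matrix (Fin d) (Fin r) ℝ) (Vt : Matrix (Fin n) (Fin r) ℝ) (σd : Fin r → ℝ)
    (hUt : Utᵀ * Ut = 1) (hVt : Vtᵀ * Vt = 1)
    (hσpos : ∀ i, 0 < σd i) (hσmono : Antitone σd)
    (hsv2 : Xᵀ * Ut = Vt * Matrix.diagonal σd) :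
    opNorm ((1 - projMat (rowSpace (Ut * Matrix.diagonal σd * Vtᵀ))) *
        projMat (rowSpace A))
      ≤ min (max (opNorm (E * Vt)) (opNorm (Eᵀ * Ut)) / σd ⟨r - 1, by omega⟩) 1 := by
  set s := σd ⟨r - 1, by omega⟩
  have hs : 0 < s := hσpos _
  have hσs : ∀ i, s ≤ σd i := fun i => hσmono (Fin.le_def.2 (by simp only; omega))
  have hV := rowSpace_mul_diagonal_mul_transpose (Vt := Vt) (σ := σd) hUt
  have hdim : Module.finrank ℝ (rowSpace (Ut * diagonal σd * Vtᵀ)) =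
      Module.finrank ℝ (rowSpace A) := by
    rw [hV, finrank_range_toEuclideanLin_mul_diagonal hVt hs hσs, finrank_rowSpace, hA]
  rw [opNorm_one_sub_projMat_mul_projMat]
  refine Submodule.norm_starProjection_orthogonal_comp_starProjection_le hdim
    (div_nonneg ((opNorm_nonneg _).trans (le_max_right _ _)) hs.le) fun y hy => ?_
  calc _ ≤ opNorm (Eᵀ * Ut) / s * ‖y‖ :=
        norm_sub_starProjection_rowSpace_le hVt hs hσs (hX ▸ hsv2) (hV ▸ hy)
    _ ≤ _ := by gcongr; exact le_max_right _ _
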